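/- arXiv:1108.5878 — 2 statements merged into one kernel-verified Lean document; each statement's English description precedes it below -/
import Mathlib

section
/- Nonnegativity of the spatially discretized biosensor system: Fix γ > 0, v̄ > 0, grid parameters P, Q ≥ 2, step sizes Δy, Δz > 0 with Δy < γ/v̄, velocity values 0 ≤ v_j ≤ v̄ for j = 1,…,Q−1, inlet value A₁ ≥ 0, nonnegative rate constants f₁,…,f₇, r₁,…,r₇, and a subset V ⊆ {1,…,P−1} of sensor grid indices. Consider the ODE system in the variables A_{i,j}(t) for 1 ≤ i ≤ P−1, 1 ≤ j ≤ Q−1 and u^i(t) = (B^i, C^i, D^i, S^i, W^i, X^i, Y^i, Z^i) ∈ ℝ⁸ for i ∈ V, given by A′_{i,j} = γ(A_{i−1,j} − 2A_{i,j} + A_{i+1,j})/Δy² − v_j (A_{i+1,j} − A_{i,j})/Δy + γ(A_{i,j−1} − 2A_{i,j} + A_{i,j+1})/Δz² and (u^i)′ = G(u^i, A_{i,0}), where the boundary values are defined by A_{0,j} = A₁, A_{P,j} = A_{P−1,j}, A_{i,Q} = A_{i,Q−1}, A_{i,0} = A_{i,1} for i ∉ V, and A_{i,0} = (A_{i,1}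 + (Δz/γ)(r₁W^i + r₂X^i + r₆Z^i)) / (1 + (Δz/γ)(f₁B^i + f₂C^i + f₆D^i)) for i ∈ V. If the initial data satisfy A_{i,j}(0) ≥ 0 for all i, j and u^i(0) ≥ 0 componentwise for all i ∈ V, then any solution of this ODE system satisfies A_{i,j}(t) ≥ 0 and u^i(t) ≥ 0 componentwise for all t ≥ 0 in the interval of existence of the solution. -/
/-!
Nonnegativity follows from the invariance of the orthant under a quasi-positive vector field:
whenever a coordinate is minimal and nonpositive, its derivative is at least `K` times its value.
Shifting the solution by `ε e^{L t}` with `L > K` makes the derivative of a coordinate positive at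
the first time it touches zero, so the shifted solution never leaves the orthant; then `ε → 0`.

The biosensor system is quasi-positive near the orthant, with `K` depending on a bound for the
solution on the compact time interval `[0, t]`: the upwind scheme is monotone since `v_j Δy < γ`,
the negative terms of each component of `G` contain that component's own species, and the sensor
value `A_{i,0}`, whose denominator stays above `1 / 2` near the orthant, is bounded below by a
fixed multiple of the minimal coordinate.
-/

open Set

/-- The right-hand side `G(u, A)` of the ICS biosensor chemical dynamics, for
`u = (B, C, D, S, W, X, Y, Z) ∈ ℝ⁸` (indexed `0,…,7`), concentration `A`, and rate
constants `f₁,…,f₇, r₁,…,r₇`. -/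
noncomputable def icsG (f₁ f₂ f₃ f₄ f₅ f₆ f₇ r₁ r₂ r₃ r₄ r₅ r₆ r₇ A : ℝ)
    (u : Fin 8 → ℝ) : Fin 8 → ℝ :=
  ![-(f₁ * A * u 0 - r₁ * u 4) - (f₄ * u 5 * u 0 - r₄ * u 6),
    -(f₂ * A * u 1 - r₂ * u 5) - (f₃ * u 4 * u 1 - r₃ * u 6) - (f₅ * u 1 * u 3 - r₅ * u 2),
    (f₅ * u 1 * u 3 - r₅ * u 2) - (f₆ * A * u 2 - r₆ * u 7),
    -(f₅ * u 1 * u 3 - r₅ * u 2) - (f₇ * u 5 * u 3 - r₇ * u 7),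
    (f₁ * A * u 0 - r₁ * u 4) - (f₃ * u 4 * u 1 - r₃ * u 6),
    (f₂ * A * u 1 - r₂ * u 5) - (f₄ * u 5 * u 0 - r₄ * u 6) - (f₇ * u 5 * u 3 - r₇ * u 7),
    (f₃ * u 4 * u 1 - r₃ * u 6) + (f₄ * u 5 * u 0 - r₄ * u 6),
    (f₆ * A * u 2 - r₆ * u 7) + (f₇ * u 5 * u 3 - r₇ * u 7)]

open Filter Topology

theorem eventually_nonneg_of_hasDerivWithinAt_Ioi {f : ℝ → ℝ} {f' c : ℝ}
    (hf : HasDerivWithinAt f f' (Ioi c) c) (h0 : 0 ≤ f c) (h : f c = 0 → 0 < f') :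
    ∀ᶠ t in 𝓝[>] c, 0 ≤ f t := by
  rcases h0.lt_or_eq with hpos | hzero
  · exact (hf.continuousWithinAt.eventually_const_lt hpos).mono fun _ ht => ht.le
  · have hslope : Tendsto (slope f c) (𝓝[>] c) (𝓝 f') := by
      simpa using hasDerivWithinAt_iff_tendsto_slope.mp hf
    filter_upwards [hslope.eventually_const_lt (h hzero.symm), self_mem_nhdsWithin]
      with t hpos (ht : c < t)
    rw [slope_def_field, ← hzero, sub_zero] at hpos
    exact (div_pos_iff_of_pos_right (sub_pos.2 ht)).1 hpos |>.le

theorem add_exp_nonneg_of_quasipositive {ι : Type*} [Finite ι] {x F : ℝ → ι → ℝ}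
    {a b K L δ ε : ℝ} (hKL : K < L) (hε : 0 < ε)
    (hεδ : ∀ t ∈ Icc a b, ε * Real.exp (L * (t - a)) ≤ δ)
    (hx : ∀ i, ∀ t ∈ Icc a b, HasDerivWithinAt (fun τ => x τ i) (F t i) (Icc a b) t)
    (h0 : ∀ i, 0 ≤ x a i)
    (hF : ∀ t ∈ Ico a b, ∀ i, (∀ j, -δ ≤ x t j) → (∀ j, x t i ≤ x t j) → x t i ≤ 0 →
      K * x t i ≤ F t i) :
    ∀ t ∈ Icc a b, ∀ i, 0 ≤ x t i + ε * Real.exp (L * (t - a)) := by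
  set E : ℝ → ℝ := fun t => ε * Real.exp (L * (t - a)) with hE
  have hE' : ∀ t, HasDerivAt E (E t * L) t := fun t => by
    simpa [hE, mul_assoc] using
      (((hasDerivAt_id t).sub_const a).const_mul L).exp.const_mul ε
  have hz : ∀ i, ∀ t ∈ Icc a b,
      HasDerivWithinAt (fun τ => x τ i + E τ) (F t i + E t * L) (Icc a b) t :=
    fun i t ht => (hx i t ht).add (hE' t).hasDerivWithinAt
  suffices Icc a b ⊆ {t | ∀ i, 0 ≤ x t i + E t} from fun t ht => this ht
  refine IsClosed.Icc_subset_of_forall_mem_nhdsWithin ?_ ?_ ?_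
  · have hcont : ContinuousOn (fun t i => x t i + E t) (Icc a b) :=
      continuousOn_pi.2 fun i t ht => (hz i t ht).continuousWithinAt
    have horthant : IsClosed {y : ι → ℝ | ∀ i, 0 ≤ y i} := by
      simpa only [ofPred_forall] using
        isClosed_iInter fun i => isClosed_le continuous_const (continuous_apply i)
    rw [inter_comm]
    exact hcont.preimage_isClosed_of_isClosed isClosed_Icc horthant
  · intro i
    simpa [hE] using (h0 i).trans (le_add_of_nonneg_right hε.le)
  · rintro c ⟨hc, hca, hcb⟩
    have hEpos : 0 < E c := mul_pos hε (Real.exp_pos _)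
    refine eventually_all.2 fun i => eventually_nonneg_of_hasDerivWithinAt_Ioi
      ((hz i c ⟨hca, hcb.le⟩).mono_of_mem_nhdsWithin (Icc_mem_nhdsGT_of_mem ⟨hca, hcb⟩))
      (hc i) fun hzero => ?_
    have hmin : ∀ j, x c i ≤ x c j := fun j => by linarith [hc j]
    have hlow : ∀ j, -δ ≤ x c j := fun j => by linarith [hc j, hεδ c ⟨hca, hcb.le⟩]
    have hslow := hF c ⟨hca, hcb⟩ i hlow hmin (by linarith)
    rw [show x c i = -E c by linarith] at hslow
    nlinarith [mul_pos (sub_pos.2 hKL) hEpos]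

theorem nonneg_of_quasipositive {ι : Type*} [Finite ι] {x F : ℝ → ι → ℝ} {a b K δ : ℝ}
    (hδ : 0 < δ)
    (hx : ∀ i, ∀ t ∈ Icc a b, HasDerivWithinAt (fun τ => x τ i) (F t i) (Icc a b) t)
    (h0 : ∀ i, 0 ≤ x a i)
    (hF : ∀ t ∈ Ico a b, ∀ i, (∀ j, -δ ≤ x t j) → (∀ j, x t i ≤ x t j) → x t i ≤ 0 →
      K * x t i ≤ F t i) :
    ∀ t ∈ Icc a b, ∀ i, 0 ≤ x t i := by
  intro t ht i
  set L := |K| + 1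
  have hKL : K < L := (le_abs_self K).trans_lt (lt_add_one _)
  have hexp : ∀ s ∈ Icc a b, Real.exp (L * (s - a)) ≤ Real.exp (L * (b - a)) := fun s hs =>
    Real.exp_le_exp.2 (mul_le_mul_of_nonneg_left (by linarith [hs.2]) (by positivity))
  have hshift : ∀ᶠ ε in 𝓝[>] (0 : ℝ), 0 ≤ x t i + ε * Real.exp (L * (t - a)) := by
    filter_upwards [Ioo_mem_nhdsGT (div_pos hδ (Real.exp_pos (L * (b - a))))] with ε hε
    refine add_exp_nonneg_of_quasipositive hKL hε.1 (fun s hs => ?_) hx h0 hF t ht i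
    calc ε * Real.exp (L * (s - a)) ≤ δ / Real.exp (L * (b - a)) * Real.exp (L * (b - a)) :=
          mul_le_mul hε.2.le (hexp s hs) (Real.exp_pos _).le (by positivity)
      _ = δ := div_mul_cancel₀ δ (Real.exp_pos _).ne'
  have hlim : Tendsto (fun ε => x t i + ε * Real.exp (L * (t - a))) (𝓝[>] 0) (𝓝 (x t i)) := by
    have hcont : Continuous fun ε => x t i + ε * Real.exp (L * (t - a)) := by fun_prop
    exact (hcont.tendsto' 0 (x t i) (by simp)).mono_left nhdsWithin_le_nhds
  exact ge_of_tendsto hlim hshift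

theorem exists_forall_abs_le {ι : Type*} [Fintype ι] {x : ℝ → ι → ℝ} {s : Set ℝ}
    (hs : IsCompact s) (hx : ∀ i, ContinuousOn (x · i) s) (M₀ : ℝ) :
    ∃ M, M₀ ≤ M ∧ ∀ t ∈ s, ∀ i, |x t i| ≤ M := by
  obtain ⟨C, hC⟩ := hs.exists_bound_of_continuousOn (continuousOn_pi.2 hx)
  exact ⟨max M₀ C, le_max_left _ _, fun t ht i =>
    (norm_le_pi_norm (x t) i).trans ((hC t ht).trans (le_max_right _ _))⟩

section MassAction

variable {f r σ ℓ M p q w : ℝ}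

theorem le_mul_of_mem_Icc (hℓ : ℓ ≤ 0) (hM : 0 ≤ M) (hp : p ∈ Icc ℓ M) (hq : q ∈ Icc ℓ M) :
    M * ℓ ≤ p * q := by
  obtain ⟨hp₁, hp₂⟩ := hp
  obtain ⟨hq₁, hq₂⟩ := hq
  rcases le_total 0 p with h | h <;> rcases le_total 0 q with h' | h' <;> nlinarith

theorem le_reaction (hf : 0 ≤ f) (hr : 0 ≤ r) (hσ : f + r ≤ σ) (hℓ : ℓ ≤ 0) (hM : 0 ≤ M)
    (hp : p ∈ Icc ℓ M) (hq : q ∈ Icc ℓ M) (hw : w ≤ 0) :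
    σ * (M * ℓ) ≤ f * p * q - r * w := by
  have hpq := le_mul_of_mem_Icc hℓ hM hp hq
  have hMℓ : M * ℓ ≤ 0 := mul_nonpos_of_nonneg_of_nonpos hM hℓ
  nlinarith [mul_le_mul_of_nonneg_left hpq hf, mul_nonneg hr (neg_nonneg.2 hw)]

theorem le_neg_reaction (hf : 0 ≤ f) (hr : 0 ≤ r) (hσ : f + r ≤ σ) (hM : 1 ≤ M) (hℓM : -M ≤ ℓ)
    (hp : p ∈ Icc ℓ M) (hq : q ∈ Icc ℓ 0) (hw : ℓ ≤ w) :
    σ * (M * ℓ) ≤ -(f * p * q - r * w) := by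
  have hℓ : ℓ ≤ 0 := hq.1.trans hq.2
  have hpq := le_mul_of_mem_Icc hℓ (by linarith) hp
    ⟨hℓ.trans (neg_nonneg.2 hq.2), by linarith [hq.1]⟩
  have hMℓ : M * ℓ ≤ ℓ := by nlinarith
  nlinarith [mul_le_mul_of_nonneg_left hpq hf, mul_le_mul_of_nonneg_left (hMℓ.trans hw) hr]

end MassAction

theorem le_icsG {f₁ f₂ f₃ f₄ f₅ f₆ f₇ r₁ r₂ r₃ r₄ r₅ r₆ r₇ : ℝ}
    (hf₁ : 0 ≤ f₁) (hf₂ : 0 ≤ f₂) (hf₃ : 0 ≤ f₃) (hf₄ : 0 ≤ f₄) (hf₅ : 0 ≤ f₅)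
    (hf₆ : 0 ≤ f₆) (hf₇ : 0 ≤ f₇)
    (hr₁ : 0 ≤ r₁) (hr₂ : 0 ≤ r₂) (hr₃ : 0 ≤ r₃) (hr₄ : 0 ≤ r₄) (hr₅ : 0 ≤ r₅)
    (hr₆ : 0 ≤ r₆) (hr₇ : 0 ≤ r₇) {ℓ M A : ℝ} {u : Fin 8 → ℝ} {k : Fin 8}
    (hM : 1 ≤ M) (hℓM : -M ≤ ℓ) (hA : A ∈ Icc ℓ M) (hu : ∀ l, u l ∈ Icc ℓ M) (hk : u k ≤ 0) :
    3 * (f₁ + f₂ + f₃ + f₄ + f₅ + f₆ + f₇ + r₁ + r₂ + r₃ + r₄ + r₅ + r₆ + r₇) * (M * ℓ) ≤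
      icsG f₁ f₂ f₃ f₄ f₅ f₆ f₇ r₁ r₂ r₃ r₄ r₅ r₆ r₇ A u k := by
  obtain ⟨σ, hσ_def⟩ :
      ∃ σ, σ = f₁ + f₂ + f₃ + f₄ + f₅ + f₆ + f₇ + r₁ + r₂ + r₃ + r₄ + r₅ + r₆ + r₇ := ⟨_, rfl⟩
  rw [← hσ_def]
  have hℓ : ℓ ≤ 0 := (hu k).1.trans hk
  have hM₀ : 0 ≤ M := by linarith
  have hσ : σ * (M * ℓ) ≤ 0 :=
    mul_nonpos_of_nonneg_of_nonpos (by linarith) (mul_nonpos_of_nonneg_of_nonpos hM₀ hℓ)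
  have hkI : u k ∈ Icc ℓ 0 := ⟨(hu k).1, hk⟩
  -- each species takes part in at most three reactions, each contributing at least `σ * (M * ℓ)`
  fin_cases k <;>
    simp only [Fin.zero_eta, Fin.mk_one, Fin.reduceFinMk, Fin.isValue, icsG, Matrix.cons_val,
      Matrix.cons_val_zero, Matrix.cons_val_one] at hkI ⊢
  · linarith [le_neg_reaction (σ := σ) hf₁ hr₁ (by linarith) hM hℓM hA hkI (hu 4).1,
      le_neg_reaction (σ := σ) hf₄ hr₄ (by linarith) hM hℓM (hu 5) hkI (hu 6).1]
  · linarith [le_neg_reaction (σ := σ) hf₂ hr₂ (by linarith) hM hℓM hA hkI (hu 5).1,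
      le_neg_reaction (σ := σ) hf₃ hr₃ (by linarith) hM hℓM (hu 4) hkI (hu 6).1,
      le_neg_reaction (σ := σ) hf₅ hr₅ (by linarith) hM hℓM (hu 3) hkI (hu 2).1]
  · linarith [le_reaction (σ := σ) hf₅ hr₅ (by linarith) hℓ hM₀ (hu 1) (hu 3) hkI.2,
      le_neg_reaction (σ := σ) hf₆ hr₆ (by linarith) hM hℓM hA hkI (hu 7).1]
  · linarith [le_neg_reaction (σ := σ) hf₅ hr₅ (by linarith) hM hℓM (hu 1) hkI (hu 2).1,
      le_neg_reaction (σ := σ) hf₇ hr₇ (by linarith) hM hℓM (hu 5) hkI (hu 7).1]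
  · linarith [le_reaction (σ := σ) hf₁ hr₁ (by linarith) hℓ hM₀ hA (hu 0) hkI.2,
      le_neg_reaction (σ := σ) hf₃ hr₃ (by linarith) hM hℓM (hu 1) hkI (hu 6).1]
  · linarith [le_reaction (σ := σ) hf₂ hr₂ (by linarith) hℓ hM₀ hA (hu 1) hkI.2,
      le_neg_reaction (σ := σ) hf₄ hr₄ (by linarith) hM hℓM (hu 0) hkI (hu 6).1,
      le_neg_reaction (σ := σ) hf₇ hr₇ (by linarith) hM hℓM (hu 3) hkI (hu 7).1]
  · linarith [le_reaction (σ := σ) hf₃ hr₃ (by linarith) hℓ hM₀ (hu 4) (hu 1) hkI.2,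
      le_reaction (σ := σ) hf₄ hr₄ (by linarith) hℓ hM₀ (hu 5) (hu 0) hkI.2]
  · linarith [le_reaction (σ := σ) hf₆ hr₆ (by linarith) hℓ hM₀ hA (hu 2) hkI.2,
      le_reaction (σ := σ) hf₇ hr₇ (by linarith) hℓ hM₀ (hu 5) (hu 3) hkI.2]

theorem div_mem_Icc_two_mul {N D m M : ℝ} (hD : 1 / 2 ≤ D) (hm : m ≤ 0) (hM : 0 ≤ M)
    (hN : N ∈ Icc m M) : N / D ∈ Icc (2 * m) (2 * M) := by
  have hD0 : 0 < D := by linarith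
  rcases le_total 0 N with h | h
  · exact ⟨by linarith [div_nonneg h hD0.le], (div_le_iff₀ hD0).2 (by nlinarith [hN.2])⟩
  · exact ⟨(le_div_iff₀ hD0).2 (by nlinarith [hN.1]),
      by linarith [div_nonpos_of_nonpos_of_nonneg h hD0.le]⟩

theorem sensor_value_mem_Icc {κ f₁ f₂ f₆ r₁ r₂ r₆ a m M : ℝ} {u : Fin 8 → ℝ} (hκ : 0 ≤ κ)
    (hf₁ : 0 ≤ f₁) (hf₂ : 0 ≤ f₂) (hf₆ : 0 ≤ f₆) (hr₁ : 0 ≤ r₁) (hr₂ : 0 ≤ r₂) (hr₆ : 0 ≤ r₆)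
    (hm : m ≤ 0) (hM : 0 ≤ M) (hmκ : -1 / 2 ≤ κ * (f₁ + f₂ + f₆) * m)
    (ha : a ∈ Icc m M) (hu : ∀ l, u l ∈ Icc m M) :
    (a + κ * (r₁ * u 4 + r₂ * u 5 + r₆ * u 7)) / (1 + κ * (f₁ * u 0 + f₂ * u 1 + f₆ * u 2)) ∈
      Icc (2 * (1 + κ * (r₁ + r₂ + r₆)) * m) (2 * (1 + κ * (r₁ + r₂ + r₆)) * M) := by
  have hκf : ∀ {f : ℝ}, 0 ≤ f → ∀ l, κ * f * m ≤ κ * f * u l ∧ κ * f * u l ≤ κ * f * M :=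
    fun hf l => ⟨mul_le_mul_of_nonneg_left (hu l).1 (mul_nonneg hκ hf),
      mul_le_mul_of_nonneg_left (hu l).2 (mul_nonneg hκ hf)⟩
  have hD : 1 / 2 ≤ 1 + κ * (f₁ * u 0 + f₂ * u 1 + f₆ * u 2) := by
    nlinarith [(hκf hf₁ 0).1, (hκf hf₂ 1).1, (hκf hf₆ 2).1]
  have hN : a + κ * (r₁ * u 4 + r₂ * u 5 + r₆ * u 7) ∈
      Icc ((1 + κ * (r₁ + r₂ + r₆)) * m) ((1 + κ * (r₁ + r₂ + r₆)) * M) := by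
    constructor <;>
    nlinarith [ha.1, ha.2, hκf hr₁ 4, hκf hr₂ 5, hκf hr₆ 7]
  simpa only [mul_assoc] using div_mem_Icc_two_mul hD
    (mul_nonpos_of_nonneg_of_nonpos (by positivity) hm) (by positivity) hN

theorem forall_mem_of_boundary_conditions {S : Set ℝ} {P Q : ℕ} {A₁ : ℝ} {g : ℕ → ℕ → ℝ}
    (hP : 2 ≤ P) (hQ : 2 ≤ Q) (hA₁ : A₁ ∈ S)
    (hinlet : ∀ j ≤ Q, g 0 j = A₁) (houtlet : ∀ j ≤ Q, g P j = g (P - 1) j)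
    (hceiling : ∀ i ≤ P, g i Q = g i (Q - 1)) (hfloor : ∀ i, 1 ≤ i → i ≤ P - 1 → g i 0 ∈ S)
    (hint : ∀ i j, 1 ≤ i → i ≤ P - 1 → 1 ≤ j → j ≤ Q - 1 → g i j ∈ S) :
    ∀ i ≤ P, ∀ j ≤ Q, g i j ∈ S := by
  have hcolumn : ∀ i, 1 ≤ i → i ≤ P - 1 → ∀ j ≤ Q, g i j ∈ S := by
    intro i hi₁ hi₂ j hj
    rcases Nat.eq_zero_or_pos j with rfl | hj₀
    · exact hfloor i hi₁ hi₂
    rcases hj.lt_or_eq with hjQ | rfl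
    · exact hint i j hi₁ hi₂ hj₀ (by omega)
    · rw [hceiling i (by omega)]; exact hint i _ hi₁ hi₂ (by omega) le_rfl
  intro i hi j hj
  rcases Nat.eq_zero_or_pos i with rfl | hi₀
  · rw [hinlet j hj]; exact hA₁
  rcases hi.lt_or_eq with hiP | rfl
  · exact hcolumn i hi₀ (by omega) j hj
  · rw [houtlet j hj]; exact hcolumn _ (by omega) le_rfl j hj

theorem le_upwind_diffusion {a b c ℓ m n₁ n₂ n₃ n₄ : ℝ} (hb : 0 ≤ b) (hba : b ≤ a) (hc : 0 ≤ c)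
    (hℓ : ℓ ≤ 0) (hm : m ≤ 0) (h₁ : ℓ ≤ n₁) (h₂ : ℓ ≤ n₂) (h₃ : ℓ ≤ n₃) (h₄ : ℓ ≤ n₄) :
    (2 * a + 2 * c) * ℓ ≤ a * (n₁ - 2 * m + n₂) - b * (n₂ - m) + c * (n₃ - 2 * m + n₄) := by
  nlinarith [mul_le_mul_of_nonneg_left h₁ (hb.trans hba),
    mul_le_mul_of_nonneg_left h₂ (sub_nonneg.2 hba), mul_le_mul_of_nonneg_left h₃ hc,
    mul_le_mul_of_nonneg_left h₄ hc, mul_nonneg hb (neg_nonneg.2 hℓ)]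

noncomputable def upwindRHS (γ Δy Δz : ℝ) (v : ℕ → ℝ) (g : ℕ → ℕ → ℝ) (i j : ℕ) : ℝ :=
  γ * (g (i - 1) j - 2 * g i j + g (i + 1) j) / Δy ^ 2 - v j * (g (i + 1) j - g i j) / Δy
    + γ * (g i (j - 1) - 2 * g i j + g i (j + 1)) / Δz ^ 2

theorem le_upwindRHS {γ Δy Δz ℓ : ℝ} {v : ℕ → ℝ} {g : ℕ → ℕ → ℝ} {i j : ℕ}
    (hγ : 0 < γ) (hΔy : 0 < Δy) (hv : 0 ≤ v j) (hvΔy : v j * Δy ≤ γ) (hℓ : ℓ ≤ 0)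
    (hg : g i j ≤ 0)
    (h₁ : ℓ ≤ g (i - 1) j) (h₂ : ℓ ≤ g (i + 1) j) (h₃ : ℓ ≤ g i (j - 1)) (h₄ : ℓ ≤ g i (j + 1)) :
    (2 * (γ / Δy ^ 2) + 2 * (γ / Δz ^ 2)) * ℓ ≤ upwindRHS γ Δy Δz v g i j := by
  have hba : v j / Δy ≤ γ / Δy ^ 2 := by
    rw [div_le_div_iff₀ hΔy (by positivity)]; nlinarith
  have := le_upwind_diffusion (c := γ / Δz ^ 2) (div_nonneg hv hΔy.le) hba (by positivity)
    hℓ hg h₁ h₂ h₃ h₄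
  unfold upwindRHS
  linear_combination this

theorem mem_Icc_mul_of_mem_Icc {c m M y : ℝ} (hc : 1 ≤ c) (hm : m ≤ 0) (hM : 0 ≤ M)
    (hy : y ∈ Icc m M) : y ∈ Icc (c * m) (c * M) :=
  ⟨by nlinarith [hy.1], by nlinarith [hy.2]⟩

theorem grid_mem_Icc_of_interior {κ A₁ m M f₁ f₂ f₆ r₁ r₂ r₆ : ℝ} {P Q : ℕ} {V : Finset ℕ}
    {g : ℕ → ℕ → ℝ} {w : ℕ → Fin 8 → ℝ} (hκ : 0 ≤ κ) (hA₁ : 0 ≤ A₁) (hA₁M : A₁ ≤ M)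
    (hP : 2 ≤ P) (hQ : 2 ≤ Q)
    (hf₁ : 0 ≤ f₁) (hf₂ : 0 ≤ f₂) (hf₆ : 0 ≤ f₆) (hr₁ : 0 ≤ r₁) (hr₂ : 0 ≤ r₂) (hr₆ : 0 ≤ r₆)
    (hinlet : ∀ j ≤ Q, g 0 j = A₁) (houtlet : ∀ j ≤ Q, g P j = g (P - 1) j)
    (hceiling : ∀ i ≤ P, g i Q = g i (Q - 1))
    (hfloor : ∀ i, 1 ≤ i → i ≤ P - 1 → i ∉ V → g i 0 = g i 1)
    (hsensor : ∀ i ∈ V, g i 0 = (g i 1 + κ * (r₁ * w i 4 + r₂ * w i 5 + r₆ * w i 7)) /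
      (1 + κ * (f₁ * w i 0 + f₂ * w i 1 + f₆ * w i 2)))
    (hm : m ≤ 0) (hmκ : -1 / 2 ≤ κ * (f₁ + f₂ + f₆) * m)
    (hint : ∀ i j, 1 ≤ i → i ≤ P - 1 → 1 ≤ j → j ≤ Q - 1 → g i j ∈ Icc m M)
    (hw : ∀ i ∈ V, ∀ k, w i k ∈ Icc m M) :
    ∀ i ≤ P, ∀ j ≤ Q, g i j ∈
      Icc (2 * (1 + κ * (r₁ + r₂ + r₆)) * m) (2 * (1 + κ * (r₁ + r₂ + r₆)) * M) := by
  have hM : 0 ≤ M := hA₁.trans hA₁M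
  have hc : 1 ≤ 2 * (1 + κ * (r₁ + r₂ + r₆)) := by
    nlinarith [mul_nonneg hκ (by positivity : 0 ≤ r₁ + r₂ + r₆)]
  have widen {y : ℝ} := mem_Icc_mul_of_mem_Icc (y := y) hc hm hM
  refine forall_mem_of_boundary_conditions hP hQ (widen ⟨hm.trans hA₁, hA₁M⟩) hinlet houtlet
    hceiling (fun i hi₁ hi₂ => ?_) fun i j hi₁ hi₂ hj₁ hj₂ => widen (hint i j hi₁ hi₂ hj₁ hj₂)
  by_cases hiV : i ∈ V
  · rw [hsensor i hiV]
    exact sensor_value_mem_Icc hκ hf₁ hf₂ hf₆ hr₁ hr₂ hr₆ hm hM hmκ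
      (hint i 1 hi₁ hi₂ le_rfl (by omega)) (hw i hiV)
  · rw [hfloor i hi₁ hi₂ hiV]
    exact widen (hint i 1 hi₁ hi₂ le_rfl (by omega))

abbrev interiorGrid (P Q : ℕ) : Finset (ℕ × ℕ) :=
  Finset.Icc 1 (P - 1) ×ˢ Finset.Icc 1 (Q - 1)

abbrev StateIndex (P Q : ℕ) (V : Finset ℕ) : Type :=
  interiorGrid P Q ⊕ (V × Fin 8)

theorem mem_interiorGrid_iff {P Q i j : ℕ} :
    (i, j) ∈ interiorGrid P Q ↔ 1 ≤ i ∧ i ≤ P - 1 ∧ 1 ≤ j ∧ j ≤ Q - 1 := by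
  simp [and_assoc]

def stateVector {P Q : ℕ} {V : Finset ℕ} (g : ℕ → ℕ → ℝ) (w : ℕ → Fin 8 → ℝ) :
    StateIndex P Q V → ℝ :=
  Sum.elim (fun p => g p.1.1 p.1.2) fun q => w q.1 q.2

noncomputable def biosensorRHS {P Q : ℕ} {V : Finset ℕ} (γ Δy Δz : ℝ) (v : ℕ → ℝ)
    (f₁ f₂ f₃ f₄ f₅ f₆ f₇ r₁ r₂ r₃ r₄ r₅ r₆ r₇ : ℝ) (g : ℕ → ℕ → ℝ) (w : ℕ → Fin 8 → ℝ) :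
    StateIndex P Q V → ℝ :=
  Sum.elim (fun p => upwindRHS γ Δy Δz v g p.1.1 p.1.2)
    fun q => icsG f₁ f₂ f₃ f₄ f₅ f₆ f₇ r₁ r₂ r₃ r₄ r₅ r₆ r₇ (g q.1 0) (w q.1) q.2

theorem forall_stateVector_iff {P Q : ℕ} {V : Finset ℕ} {g : ℕ → ℕ → ℝ}
    {w : ℕ → Fin 8 → ℝ} {Φ : ℝ → Prop} :
    (∀ idx : StateIndex P Q V, Φ (stateVector g w idx)) ↔
      (∀ i j, 1 ≤ i → i ≤ P - 1 → 1 ≤ j → j ≤ Q - 1 → Φ (g i j)) ∧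
        (∀ i ∈ V, ∀ k, Φ (w i k)) := by
  refine ⟨fun h => ⟨fun i j h₁ h₂ h₃ h₄ => ?_, fun i hi k => h (.inr (⟨i, hi⟩, k))⟩, ?_⟩
  · exact h (.inl ⟨(i, j), mem_interiorGrid_iff.2 ⟨h₁, h₂, h₃, h₄⟩⟩)
  rintro ⟨hg, hw⟩ (⟨⟨i, j⟩, hij⟩ | ⟨⟨i, hi⟩, k⟩)
  · obtain ⟨h₁, h₂, h₃, h₄⟩ := mem_interiorGrid_iff.1 hij
    exact hg i j h₁ h₂ h₃ h₄
  · exact hw i hi k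

theorem neg_half_le_of_neg_inv_le {φ m : ℝ} (hφ : 0 ≤ φ) (hm : -(2 * (1 + φ))⁻¹ ≤ m) :
    -1 / 2 ≤ φ * m ∧ -1 / 2 ≤ m := by
  have hpos : 0 < 2 * (1 + φ) := by positivity
  have hφδ : φ * (2 * (1 + φ))⁻¹ ≤ 1 / 2 := by
    rw [← div_eq_mul_inv, div_le_iff₀ hpos]; linarith
  have hδ : (2 * (1 + φ))⁻¹ ≤ 1 / 2 := by
    rw [inv_le_comm₀ hpos (by norm_num)]; linarith
  exact ⟨by linarith [mul_le_mul_of_nonneg_left hm hφ], by linarith⟩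

theorem biosensorRHS_quasipositive {γ Δy Δz A₁ M : ℝ} (hγ : 0 < γ) (hΔy : 0 < Δy)
    (hΔz : 0 < Δz) (hA₁ : 0 ≤ A₁) (hM : 1 ≤ M) (hA₁M : A₁ ≤ M) {P Q : ℕ} (hP : 2 ≤ P)
    (hQ : 2 ≤ Q) {v : ℕ → ℝ} (hv : ∀ j, 1 ≤ j → j ≤ Q - 1 → 0 ≤ v j ∧ v j * Δy ≤ γ)
    {f₁ f₂ f₃ f₄ f₅ f₆ f₇ r₁ r₂ r₃ r₄ r₅ r₆ r₇ : ℝ}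
    (hf₁ : 0 ≤ f₁) (hf₂ : 0 ≤ f₂) (hf₃ : 0 ≤ f₃) (hf₄ : 0 ≤ f₄) (hf₅ : 0 ≤ f₅)
    (hf₆ : 0 ≤ f₆) (hf₇ : 0 ≤ f₇)
    (hr₁ : 0 ≤ r₁) (hr₂ : 0 ≤ r₂) (hr₃ : 0 ≤ r₃) (hr₄ : 0 ≤ r₄) (hr₅ : 0 ≤ r₅)
    (hr₆ : 0 ≤ r₆) (hr₇ : 0 ≤ r₇) {V : Finset ℕ} (hV : ∀ i ∈ V, 1 ≤ i ∧ i ≤ P - 1) :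
    ∃ K δ : ℝ, 0 < δ ∧ ∀ (g : ℕ → ℕ → ℝ) (w : ℕ → Fin 8 → ℝ) (m : ℝ),
      (∀ j ≤ Q, g 0 j = A₁) → (∀ j ≤ Q, g P j = g (P - 1) j) →
      (∀ i ≤ P, g i Q = g i (Q - 1)) → (∀ i, 1 ≤ i → i ≤ P - 1 → i ∉ V → g i 0 = g i 1) →
      (∀ i ∈ V, g i 0 = (g i 1 + (Δz / γ) * (r₁ * w i 4 + r₂ * w i 5 + r₆ * w i 7)) /
        (1 + (Δz / γ) * (f₁ * w i 0 + f₂ * w i 1 + f₆ * w i 2))) →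
      -δ ≤ m → m ≤ 0 → (∀ idx : StateIndex P Q V, stateVector g w idx ∈ Icc m M) →
      ∀ idx : StateIndex P Q V, stateVector g w idx = m →
        K * m ≤ biosensorRHS γ Δy Δz v f₁ f₂ f₃ f₄ f₅ f₆ f₇ r₁ r₂ r₃ r₄ r₅ r₆ r₇ g w idx := by
  have hκ : 0 ≤ Δz / γ := div_nonneg hΔz.le hγ.le
  set c := 2 * (1 + Δz / γ * (r₁ + r₂ + r₆))
  have hc : 1 ≤ c := by nlinarith [mul_nonneg hκ (by positivity : 0 ≤ r₁ + r₂ + r₆)]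
  set σ := f₁ + f₂ + f₃ + f₄ + f₅ + f₆ + f₇ + r₁ + r₂ + r₃ + r₄ + r₅ + r₆ + r₇
  set D := 2 * (γ / Δy ^ 2) + 2 * (γ / Δz ^ 2)
  set φ := Δz / γ * (f₁ + f₂ + f₆)
  have hφ : 0 ≤ φ := mul_nonneg hκ (by positivity)
  -- `δ` keeps the denominators of the sensor values above `1 / 2`
  refine ⟨c * D + 3 * σ * (c * M) * c, (2 * (1 + φ))⁻¹, by positivity, ?_⟩
  intro g w m hinlet houtlet hceiling hfloor hsensor hmδ hm hbound
  obtain ⟨hint, hw⟩ := forall_stateVector_iff.1 hbound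
  obtain ⟨hmφ, hm₂⟩ := neg_half_le_of_neg_inv_le hφ hmδ
  have hcm : c * m ≤ 0 := mul_nonpos_of_nonneg_of_nonpos (by linarith) hm
  have hcmM : -(c * M) ≤ c * m := by
    linarith [mul_le_mul_of_nonneg_left (show -M ≤ m by linarith) (by linarith : 0 ≤ c)]
  have hgrid := grid_mem_Icc_of_interior hκ hA₁ hA₁M hP hQ hf₁ hf₂ hf₆ hr₁ hr₂ hr₆
    hinlet houtlet hceiling hfloor hsensor hm hmφ hint hw
  have hDm : c * D * m ≤ 0 := mul_nonpos_of_nonneg_of_nonpos (by positivity) hm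
  have hσm : 3 * σ * (c * M) * c * m ≤ 0 := mul_nonpos_of_nonneg_of_nonpos (by positivity) hm
  rintro (⟨⟨i, j⟩, hij⟩ | ⟨⟨i, hi⟩, k⟩) hidx
  · obtain ⟨hi₁, hi₂, hj₁, hj₂⟩ := mem_interiorGrid_iff.1 hij
    change g i j = m at hidx
    have := le_upwindRHS (Δz := Δz) hγ hΔy (hv j hj₁ hj₂).1 (hv j hj₁ hj₂).2 hcm (hidx ▸ hm)
      (hgrid _ (by omega) j (by omega)).1 (hgrid _ (by omega) j (by omega)).1
      (hgrid i (by omega) _ (by omega)).1 (hgrid i (by omega) _ (by omega)).1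
    change _ ≤ upwindRHS γ Δy Δz v g i j
    linarith
  · change w i k = m at hidx
    have := le_icsG hf₁ hf₂ hf₃ hf₄ hf₅ hf₆ hf₇ hr₁ hr₂ hr₃ hr₄ hr₅ hr₆ hr₇ (k := k)
      (one_le_mul_of_one_le_of_one_le hc hM) hcmM
      (hgrid i (by have := hV i hi; omega) 0 (by omega))
      (fun l => mem_Icc_mul_of_mem_Icc hc hm (by linarith) (hw i hi l)) (hidx ▸ hm)
    change _ ≤ icsG f₁ f₂ f₃ f₄ f₅ f₆ f₇ r₁ r₂ r₃ r₄ r₅ r₆ r₇ (g i 0) (w i) k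
    linarith

theorem discretized_biosensor_system_nonneg_general
    {γ vbar Δy Δz A₁ : ℝ} (hγ : 0 < γ) (hvbar : 0 < vbar)
    (hΔy : 0 < Δy) (hΔz : 0 < Δz) (hΔyγ : Δy < γ / vbar) (hA₁ : 0 ≤ A₁)
    {P Q : ℕ} (hP : 2 ≤ P) (hQ : 2 ≤ Q)
    -- velocity values at the interior grid heights
    (v : ℕ → ℝ) (hv : ∀ j, 1 ≤ j → j ≤ Q - 1 → 0 ≤ v j ∧ v j ≤ vbar)
    -- nonnegative rate constants
    (f₁ f₂ f₃ f₄ f₅ f₆ f₇ r₁ r₂ r₃ r₄ r₅ r₆ r₇ : ℝ)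
    (hf₁ : 0 ≤ f₁) (hf₂ : 0 ≤ f₂) (hf₃ : 0 ≤ f₃) (hf₄ : 0 ≤ f₄) (hf₅ : 0 ≤ f₅)
    (hf₆ : 0 ≤ f₆) (hf₇ : 0 ≤ f₇)
    (hr₁ : 0 ≤ r₁) (hr₂ : 0 ≤ r₂) (hr₃ : 0 ≤ r₃) (hr₄ : 0 ≤ r₄) (hr₅ : 0 ≤ r₅)
    (hr₆ : 0 ≤ r₆) (hr₇ : 0 ≤ r₇)
    -- the set of sensor grid indices
    (V : Finset ℕ) (hV : ∀ i ∈ V, 1 ≤ i ∧ i ≤ P - 1)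
    -- a solution (A, u) on the interval of existence [0, T)
    {T : ℝ}
    (A : ℝ → ℕ → ℕ → ℝ) (u : ℝ → ℕ → Fin 8 → ℝ)
    -- boundary values
    (hinlet : ∀ t ∈ Ico 0 T, ∀ j ≤ Q, A t 0 j = A₁)
    (houtlet : ∀ t ∈ Ico 0 T, ∀ j ≤ Q, A t P j = A t (P - 1) j)
    (hceiling : ∀ t ∈ Ico 0 T, ∀ i ≤ P, A t i Q = A t i (Q - 1))
    (hfloor : ∀ t ∈ Ico 0 T, ∀ i, 1 ≤ i → i ≤ P - 1 → i ∉ V → A t i 0 = A t i 1)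
    (hsensor : ∀ t ∈ Ico 0 T, ∀ i ∈ V,
      A t i 0 = (A t i 1 + (Δz / γ) * (r₁ * u t i 4 + r₂ * u t i 5 + r₆ * u t i 7)) /
        (1 + (Δz / γ) * (f₁ * u t i 0 + f₂ * u t i 1 + f₆ * u t i 2)))
    -- the discretized advection–diffusion ODEs at the interior grid points
    (hodeA : ∀ t ∈ Ico 0 T, ∀ i j, 1 ≤ i → i ≤ P - 1 → 1 ≤ j → j ≤ Q - 1 →
      HasDerivWithinAt (fun τ => A τ i j)
        (γ * (A t (i - 1) j - 2 * A t i j + A t (i + 1) j) / Δy ^ 2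
          - v j * (A t (i + 1) j - A t i j) / Δy
          + γ * (A t i (j - 1) - 2 * A t i j + A t i (j + 1)) / Δz ^ 2)
        (Ico 0 T) t)
    -- the ICS chemical dynamics at the sensor grid points
    (hodeu : ∀ t ∈ Ico 0 T, ∀ i ∈ V, ∀ k,
      HasDerivWithinAt (fun τ => u τ i k)
        (icsG f₁ f₂ f₃ f₄ f₅ f₆ f₇ r₁ r₂ r₃ r₄ r₅ r₆ r₇ (A t i 0) (u t i) k)
        (Ico 0 T) t)
    -- nonnegative initial data
    (hinitA : ∀ i j, 1 ≤ i → i ≤ P - 1 → 1 ≤ j → j ≤ Q - 1 → 0 ≤ A 0 i j)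
    (hinitu : ∀ i ∈ V, ∀ k, 0 ≤ u 0 i k) :
    ∀ t ∈ Ico 0 T,
      (∀ i j, 1 ≤ i → i ≤ P - 1 → 1 ≤ j → j ≤ Q - 1 → 0 ≤ A t i j) ∧
      (∀ i ∈ V, ∀ k, 0 ≤ u t i k) := by
  intro t₀ ht₀
  have hsub : Icc 0 t₀ ⊆ Ico 0 T := fun t ht => ⟨ht.1, ht.2.trans_lt ht₀.2⟩
  have hx : ∀ idx : StateIndex P Q V, ∀ t ∈ Icc 0 t₀,
      HasDerivWithinAt (fun τ => stateVector (A τ) (u τ) idx)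
      (biosensorRHS γ Δy Δz v f₁ f₂ f₃ f₄ f₅ f₆ f₇ r₁ r₂ r₃ r₄ r₅ r₆ r₇ (A t) (u t) idx)
      (Icc 0 t₀) t := by
    rintro (⟨⟨i, j⟩, hij⟩ | ⟨⟨i, hi⟩, k⟩) t ht
    · obtain ⟨h₁, h₂, h₃, h₄⟩ := mem_interiorGrid_iff.1 hij
      exact (hodeA t (hsub ht) i j h₁ h₂ h₃ h₄).mono hsub
    · exact (hodeu t (hsub ht) i hi k).mono hsub
  obtain ⟨M, hM, hxM⟩ := exists_forall_abs_le (isCompact_Icc (a := 0) (b := t₀))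
    (fun idx t ht => (hx idx t ht).continuousWithinAt) (max 1 A₁)
  have hCFL : ∀ j, 1 ≤ j → j ≤ Q - 1 → 0 ≤ v j ∧ v j * Δy ≤ γ := fun j h₁ h₂ =>
    ⟨(hv j h₁ h₂).1, by nlinarith [(hv j h₁ h₂).2, (lt_div_iff₀ hvbar).1 hΔyγ]⟩
  obtain ⟨K, δ, hδ, hK⟩ := biosensorRHS_quasipositive hγ hΔy hΔz hA₁ (le_of_max_le_left hM)
    (le_of_max_le_right hM) hP hQ hCFL hf₁ hf₂ hf₃ hf₄ hf₅ hf₆ hf₇ hr₁ hr₂ hr₃ hr₄ hr₅ hr₆ hr₇ hV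
  have hnonneg := nonneg_of_quasipositive hδ hx (forall_stateVector_iff.2 ⟨hinitA, hinitu⟩)
    (fun t ht idx hlow hmin hneg => by
      have htT : t ∈ Ico 0 T := hsub (Ico_subset_Icc_self ht)
      exact hK (A t) (u t) _ (hinlet t htT) (houtlet t htT) (hceiling t htT) (hfloor t htT)
        (hsensor t htT) (hlow idx) hneg
        (fun j => ⟨hmin j, (abs_le.1 (hxM t (Ico_subset_Icc_self ht) j)).2⟩) idx rfl)
    t₀ ⟨ht₀.1, le_rfl⟩
  exact forall_stateVector_iff.1 hnonneg

/-- Nonnegativity of the spatially discretized biosensor system: any solution of the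
finite-difference discretization of the advection–diffusion equation, coupled with the ICS
chemical dynamics at the sensor grid points through the discretized reactive boundary
condition, that starts from componentwise nonnegative data stays componentwise nonnegative
on its interval of existence `[0, T)`. -/
theorem discretized_biosensor_system_nonneg
    {γ vbar Δy Δz A₁ : ℝ} (hγ : 0 < γ) (hvbar : 0 < vbar)
    (hΔy : 0 < Δy) (hΔz : 0 < Δz) (hΔyγ : Δy < γ / vbar) (hA₁ : 0 ≤ A₁)
    {P Q : ℕ} (hP : 2 ≤ P) (hQ : 2 ≤ Q)
    -- velocity values at the interior grid heights
    (v : ℕ → ℝ) (hv : ∀ j, 1 ≤ j → j ≤ Q - 1 → 0 ≤ v j ∧ v j ≤ vbar)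
    -- nonnegative rate constants
    (f₁ f₂ f₃ f₄ f₅ f₆ f₇ r₁ r₂ r₃ r₄ r₅ r₆ r₇ : ℝ)
    (hf₁ : 0 ≤ f₁) (hf₂ : 0 ≤ f₂) (hf₃ : 0 ≤ f₃) (hf₄ : 0 ≤ f₄) (hf₅ : 0 ≤ f₅)
    (hf₆ : 0 ≤ f₆) (hf₇ : 0 ≤ f₇)
    (hr₁ : 0 ≤ r₁) (hr₂ : 0 ≤ r₂) (hr₃ : 0 ≤ r₃) (hr₄ : 0 ≤ r₄) (hr₅ : 0 ≤ r₅)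
    (hr₆ : 0 ≤ r₆) (hr₇ : 0 ≤ r₇)
    -- the set of sensor grid indices
    (V : Finset ℕ) (hV : ∀ i ∈ V, 1 ≤ i ∧ i ≤ P - 1)
    -- a solution (A, u) on the interval of existence [0, T)
    {T : ℝ} (hT : 0 < T)
    (A : ℝ → ℕ → ℕ → ℝ) (u : ℝ → ℕ → Fin 8 → ℝ)
    -- boundary values
    (hinlet : ∀ t ∈ Ico 0 T, ∀ j ≤ Q, A t 0 j = A₁)
    (houtlet : ∀ t ∈ Ico 0 T, ∀ j ≤ Q, A t P j = A t (P - 1) j)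
    (hceiling : ∀ t ∈ Ico 0 T, ∀ i ≤ P, A t i Q = A t i (Q - 1))
    (hfloor : ∀ t ∈ Ico 0 T, ∀ i, 1 ≤ i → i ≤ P - 1 → i ∉ V → A t i 0 = A t i 1)
    (hsensor : ∀ t ∈ Ico 0 T, ∀ i ∈ V,
      A t i 0 = (A t i 1 + (Δz / γ) * (r₁ * u t i 4 + r₂ * u t i 5 + r₆ * u t i 7)) /
        (1 + (Δz / γ) * (f₁ * u t i 0 + f₂ * u t i 1 + f₆ * u t i 2)))
    -- the discretized advection–diffusion ODEs at the interior grid points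
    (hodeA : ∀ t ∈ Ico 0 T, ∀ i j, 1 ≤ i → i ≤ P - 1 → 1 ≤ j → j ≤ Q - 1 →
      HasDerivWithinAt (fun τ => A τ i j)
        (γ * (A t (i - 1) j - 2 * A t i j + A t (i + 1) j) / Δy ^ 2
          - v j * (A t (i + 1) j - A t i j) / Δy
          + γ * (A t i (j - 1) - 2 * A t i j + A t i (j + 1)) / Δz ^ 2)
        (Ico 0 T) t)
    -- the ICS chemical dynamics at the sensor grid points
    (hodeu : ∀ t ∈ Ico 0 T, ∀ i ∈ V, ∀ k,
      HasDerivWithinAt (fun τ => u τ i k)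
        (icsG f₁ f₂ f₃ f₄ f₅ f₆ f₇ r₁ r₂ r₃ r₄ r₅ r₆ r₇ (A t i 0) (u t i) k)
        (Ico 0 T) t)
    -- nonnegative initial data
    (hinitA : ∀ i j, 1 ≤ i → i ≤ P - 1 → 1 ≤ j → j ≤ Q - 1 → 0 ≤ A 0 i j)
    (hinitu : ∀ i ∈ V, ∀ k, 0 ≤ u 0 i k) :
    ∀ t ∈ Ico 0 T,
      (∀ i j, 1 ≤ i → i ≤ P - 1 → 1 ≤ j → j ≤ Q - 1 → 0 ≤ A t i j) ∧
      (∀ i ∈ V, ∀ k, 0 ≤ u t i k) :=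
  discretized_biosensor_system_nonneg_general hγ hvbar hΔy hΔz hΔyγ hA₁ hP hQ v hv f₁ f₂ f₃ f₄ f₅ f₆
    f₇ r₁ r₂ r₃ r₄ r₅ r₆ r₇ hf₁ hf₂ hf₃ hf₄ hf₅ hf₆ hf₇ hr₁ hr₂ hr₃ hr₄ hr₅ hr₆ hr₇ V hV A u hinlet
    houtlet hceiling hfloor hsensor hodeA hodeu hinitA hinitu
end

section
/- Strong consistency of the least squares concentration estimator for a biosensor array (first claim of Theorem 4.4, made explicit): Let Θ = [0, A_max] ⊂ ℝ be compact with A* ∈ Θ, let α ∈ (0, 1], and let g : [0, A_max] × [0,∞) → ℝ be such that g(·, t) is continuous for each t ≥ 0 and g(·, t) → g_e uniformly on [0, A_max] as t → ∞, where g_e : [0, A_max] → ℝ is continuous and injective. Let (t^k)_{k∈ℕ} be sampling times with t^k → ∞, and suppose the observations are m_i^k = g(α^{i−1} A*, t^k) + n_i^k for i = 1,…,N and k = 1,2,…, where the noise variables n_i^k are independent identically distributed with mean zero and finite variance σ² > 0. Then any sequence (Â₁(S))_{S∈ℕ} of measurable minimizers over Θ of A₁ ↦ S⁻¹ ∑_{i=1}^N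 ∑_{k=1}^S (m_i^k − g(α^{i−1} A₁, t^k))² converges to A* almost surely as S → ∞. -/
/-!
The least squares criterion, minus its value at the true concentration, is
`S⁻¹ ∑ᵢ ∑ₖ (dᵢₖ² + 2 dᵢₖ nᵢₖ)` with `dᵢₖ = g(αⁱA*, tᵏ) - g(αⁱA₁, tᵏ)`. Since `g(·, tᵏ) → g_e`
uniformly, `dᵢₖ` differs from `Dᵢ = g_e(αⁱA*) - g_e(αⁱA₁)` by at most `2uₖ` with `uₖ → 0`
independently of `A₁`, so by the strong law of large numbers (applied to `nᵢₖ` and `|nᵢₖ|`)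
the criterion is bounded below by `F(A₁) = ∑ᵢ Dᵢ²` up to an error that tends to `0` almost
surely, uniformly in `A₁`. As the estimator makes the criterion nonpositive, `F(Â₁(S)) → 0`;
`F` is continuous on the compact `Θ` and vanishes only at `A*` because `g_e` is injective, so
`Â₁(S) → A*`.
-/

open MeasureTheory Filter ProbabilityTheory Set Topology

theorem Finset.sum_Icc_one_eq_sum_range {M : Type*} [AddCommMonoid M] (f : ℕ → M) (n : ℕ) :
    ∑ k ∈ Finset.Icc 1 n, f k = ∑ k ∈ Finset.range n, f (k + 1) := by
  rw [Finset.range_eq_Ico, Finset.sum_Ico_add' f, zero_add, Finset.Ico_add_one_right_eq_Icc]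

theorem TendstoUniformlyOn.exists_bound_tendsto_zero {X ι E : Type*} [TopologicalSpace X]
    [SeminormedAddCommGroup E] {F : ι → X → E} {f : X → E} {l : Filter ι} {s : Set X}
    (hs : IsCompact s) (hF : ∀ k, ContinuousOn (F k) s) (hf : ContinuousOn f s)
    (h : TendstoUniformlyOn F f l s) :
    ∃ u : ι → ℝ, Tendsto u l (𝓝 0) ∧ ∀ k, ∀ x ∈ s, ‖F k x - f x‖ ≤ u k := by
  refine ⟨fun k => sSup ((fun x => ‖F k x - f x‖) '' s), ?_, fun k x hx => ?_⟩
  · rw [Metric.tendsto_nhds]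
    intro ε hε
    filter_upwards [Metric.tendstoUniformlyOn_iff.1 h (ε / 2) (half_pos hε)] with k hk
    have hle : sSup ((fun x => ‖F k x - f x‖) '' s) ≤ ε / 2 :=
      Real.sSup_le (forall_mem_image.2 fun x hx => by
        rw [← dist_eq_norm, dist_comm]; exact (hk x hx).le) (half_pos hε).le
    have hnonneg : 0 ≤ sSup ((fun x => ‖F k x - f x‖) '' s) :=
      Real.sSup_nonneg (forall_mem_image.2 fun _ _ => norm_nonneg _)
    rw [Real.dist_0_eq_abs, abs_of_nonneg hnonneg]
    linarith
  · exact le_csSup (hs.image_of_continuousOn ((hF k).sub hf).norm).bddAbove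
      (mem_image_of_mem _ hx)

theorem TendstoUniformlyOn.comp_tendsto {ι κ X β : Type*} [UniformSpace β] {F : ι → X → β}
    {f : X → β} {p : Filter ι} {s : Set X} (h : TendstoUniformlyOn F f p s) {φ : κ → ι}
    {q : Filter κ} (hφ : Tendsto φ q p) : TendstoUniformlyOn (fun k => F (φ k)) f q s :=
  fun u hu => hφ.eventually (h u hu)

theorem tendsto_cesaro_mul_of_tendsto_zero {w x : ℕ → ℝ} (hx : ∀ k, 0 ≤ x k)
    (hw : Tendsto w atTop (𝓝 0)) {c : ℝ}
    (hxc : Tendsto (fun S : ℕ => (S : ℝ)⁻¹ * ∑ k ∈ Finset.range S, x k) atTop (𝓝 c)) :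
    Tendsto (fun S : ℕ => (S : ℝ)⁻¹ * ∑ k ∈ Finset.range S, w k * x k) atTop (𝓝 0) := by
  set a : ℕ → ℝ := fun S => (S : ℝ)⁻¹ * ∑ k ∈ Finset.range S, |w k| * x k
  -- `|w k| ≤ δ + (|w k| - δ)⁺`, and the positive part vanishes eventually
  have hmajor : ∀ δ S, a S ≤ δ * ((S : ℝ)⁻¹ * ∑ k ∈ Finset.range S, x k) +
      (S : ℝ)⁻¹ * ∑ k ∈ Finset.range S, max (|w k| - δ) 0 * x k := by
    intro δ S
    rw [mul_left_comm, ← mul_add, Finset.mul_sum, ← Finset.sum_add_distrib]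
    refine mul_le_mul_of_nonneg_left (Finset.sum_le_sum fun k _ => ?_) (by positivity)
    rw [← add_mul]
    exact mul_le_mul_of_nonneg_right (by linarith [le_max_left (|w k| - δ) 0]) (hx k)
  have htail : ∀ δ > 0, Tendsto (fun S : ℕ =>
      (S : ℝ)⁻¹ * ∑ k ∈ Finset.range S, max (|w k| - δ) 0 * x k) atTop (𝓝 0) := by
    intro δ hδ
    refine (tendsto_const_nhds.congr' ?_).cesaro
    filter_upwards [Metric.tendsto_nhds.1 hw δ hδ] with k hk
    rw [Real.dist_0_eq_abs] at hk
    simp [hk.le]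
  have ha : Tendsto a atTop (𝓝 0) := by
    refine tendsto_order.2 ⟨fun b hb => .of_forall fun S => hb.trans_le ?_, fun ε hε => ?_⟩
    · exact mul_nonneg (by positivity)
        (Finset.sum_nonneg fun k _ => mul_nonneg (abs_nonneg _) (hx k))
    have hδ : ∀ᶠ δ in 𝓝[>] (0 : ℝ), δ * c < ε :=
      (((continuous_mul_const c).tendsto' 0 0 (zero_mul c)).mono_left
        nhdsWithin_le_nhds).eventually_lt_const hε
    obtain ⟨δ, hδc, hδ⟩ := (hδ.and self_mem_nhdsWithin).exists
    filter_upwards [((hxc.const_mul δ).add (htail δ hδ)).eventually_lt_const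
      (by rwa [add_zero])] with S hS
    exact (hmajor δ S).trans_lt hS
  refine squeeze_zero_norm (fun S => ?_) ha
  rw [norm_mul, norm_inv, Real.norm_natCast]
  refine mul_le_mul_of_nonneg_left ((Finset.abs_sum_le_sum_abs _ _).trans_eq ?_) (by positivity)
  simp only [abs_mul, abs_of_nonneg (hx _)]

theorem sq_le_of_abs_sub_le {D B d e r : ℝ} (hD : |D| ≤ B) (hdr : |d - D| ≤ r) :
    D ^ 2 ≤ d ^ 2 + 2 * d * e + 2 * (r * (B + |e|)) - 2 * D * e := by
  have h₁ : |D * (d - D)| ≤ B * r := by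
    rw [abs_mul]; exact mul_le_mul hD hdr (abs_nonneg _) ((abs_nonneg _).trans hD)
  have h₂ : |(d - D) * e| ≤ r * |e| := by
    rw [abs_mul]; exact mul_le_mul_of_nonneg_right hdr (abs_nonneg _)
  have expand : d ^ 2 + 2 * d * e =
      D ^ 2 + 2 * (D * (d - D)) + (d - D) ^ 2 + 2 * D * e + 2 * ((d - D) * e) := by ring
  linarith [neg_abs_le (D * (d - D)), neg_abs_le ((d - D) * e), sq_nonneg (d - D)]

theorem sq_le_cesaro_add_of_abs_sub_le {D B : ℝ} (hD : |D| ≤ B) {d e r : ℕ → ℝ}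
    (hdr : ∀ k, |d k - D| ≤ r k) {S : ℕ} (hS : S ≠ 0) :
    D ^ 2 ≤ (S : ℝ)⁻¹ * ∑ k ∈ Finset.range S, (d k ^ 2 + 2 * d k * e k) +
      2 * ((S : ℝ)⁻¹ * ∑ k ∈ Finset.range S, r k * (B + |e k|)) +
      2 * B * |(S : ℝ)⁻¹ * ∑ k ∈ Finset.range S, e k| := by
  have hsum : (S : ℝ) * D ^ 2 ≤ ∑ k ∈ Finset.range S, (d k ^ 2 + 2 * d k * e k) +
      2 * ∑ k ∈ Finset.range S, r k * (B + |e k|) - 2 * D * ∑ k ∈ Finset.range S, e k := by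
    have := Finset.sum_le_sum fun k (_ : k ∈ Finset.range S) =>
      sq_le_of_abs_sub_le (e := e k) hD (hdr k)
    simpa only [Finset.sum_const, Finset.card_range, nsmul_eq_mul, Finset.sum_sub_distrib,
      Finset.sum_add_distrib, Finset.mul_sum] using this
  have hS' : (0 : ℝ) < S := by positivity
  have hmean : -(2 * D * ((S : ℝ)⁻¹ * ∑ k ∈ Finset.range S, e k)) ≤
      2 * B * |(S : ℝ)⁻¹ * ∑ k ∈ Finset.range S, e k| := by
    have := neg_abs_le (D * ((S : ℝ)⁻¹ * ∑ k ∈ Finset.range S, e k))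
    rw [abs_mul] at this
    linarith [mul_le_mul_of_nonneg_right hD (abs_nonneg ((S : ℝ)⁻¹ * ∑ k ∈ Finset.range S, e k))]
  have := mul_le_mul_of_nonneg_left hsum (inv_nonneg.2 hS'.le)
  rw [← mul_assoc, inv_mul_cancel₀ hS'.ne', one_mul] at this
  linarith

theorem IsCompact.tendsto_nhds_of_tendsto_comp {α X Y : Type*} [TopologicalSpace X]
    [TopologicalSpace Y] [T2Space Y] {s : Set X} {F : X → Y} {u : α → X} {l : Filter α} {x₀ : X}
    (hs : IsCompact s) (hF : ContinuousOn F s) (hx₀ : ∀ x ∈ s, F x = F x₀ → x = x₀)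
    (hu : ∀ᶠ a in l, u a ∈ s) (hFu : Tendsto (F ∘ u) l (𝓝 (F x₀))) : Tendsto u l (𝓝 x₀) := by
  refine hs.tendsto_nhds_of_unique_mapClusterPt hu fun x hx hux => hx₀ x hx ?_
  have hFux : MapClusterPt (F x) l (F ∘ u) :=
    hux.tendsto_comp' ((hF x hx).mono_left (inf_le_inf_left _ (le_principal_iff.2 hu)))
  exact eq_of_nhds_neBot (hFux.clusterPt.mono hFu).neBot

/-- `p i k` and `q i k` are the model of sensor `i` at time `k` for the true and the fitted
parameter, `a i` and `b i` their limits as `k → ∞`, and `u i k` the model error. -/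
theorem sum_sq_le_of_leastSquares_le {ι : Type*} [Fintype ι] {a b B : ι → ℝ}
    {p q e u : ι → ℕ → ℝ} (hab : ∀ i, |a i - b i| ≤ B i) (hp : ∀ i k, |p i k - a i| ≤ u i k)
    (hq : ∀ i k, |q i k - b i| ≤ u i k) {S : ℕ} (hS : S ≠ 0)
    (hmin : ∑ i, ∑ k ∈ Finset.range S, (p i k + e i k - q i k) ^ 2 ≤
      ∑ i, ∑ k ∈ Finset.range S, e i k ^ 2) :
    ∑ i, (a i - b i) ^ 2 ≤
      ∑ i, (2 * ((S : ℝ)⁻¹ * ∑ k ∈ Finset.range S, 2 * u i k * (B i + |e i k|)) +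
        2 * B i * |(S : ℝ)⁻¹ * ∑ k ∈ Finset.range S, e i k|) := by
  have hcross : ∑ i, (S : ℝ)⁻¹ * ∑ k ∈ Finset.range S,
      ((p i k - q i k) ^ 2 + 2 * (p i k - q i k) * e i k) ≤ 0 := by
    have hres : ∀ i k, (p i k + e i k - q i k) ^ 2 =
        ((p i k - q i k) ^ 2 + 2 * (p i k - q i k) * e i k) + e i k ^ 2 := fun i k => by ring
    rw [← Finset.mul_sum]
    refine mul_nonpos_of_nonneg_of_nonpos (by positivity) ?_
    simp only [hres, Finset.sum_add_distrib] at hmin ⊢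
    linarith
  have hper : ∀ i, (a i - b i) ^ 2 ≤ (S : ℝ)⁻¹ * ∑ k ∈ Finset.range S,
      ((p i k - q i k) ^ 2 + 2 * (p i k - q i k) * e i k) +
      (2 * ((S : ℝ)⁻¹ * ∑ k ∈ Finset.range S, 2 * u i k * (B i + |e i k|)) +
        2 * B i * |(S : ℝ)⁻¹ * ∑ k ∈ Finset.range S, e i k|) := by
    intro i
    have hmodel : ∀ k, |(p i k - q i k) - (a i - b i)| ≤ 2 * u i k := fun k =>
      calc _ = |(p i k - a i) - (q i k - b i)| := by ring_nf
        _ ≤ |p i k - a i| + |q i k - b i| := abs_sub _ _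
        _ ≤ 2 * u i k := by linarith [hp i k, hq i k]
    exact (sq_le_cesaro_add_of_abs_sub_le (e := e i) (hab i) hmodel hS).trans_eq (add_assoc _ _ _)
  have := Finset.sum_le_sum fun i (_ : i ∈ Finset.univ) => hper i
  rw [Finset.sum_add_distrib] at this
  linarith

theorem tendsto_of_leastSquares_of_tendstoUniformlyOn {X ι : Type*} [TopologicalSpace X]
    [Fintype ι] {Θ : Set X} (hΘ : IsCompact Θ) {f : ι → ℕ → X → ℝ} {h : ι → X → ℝ}
    (hf : ∀ i k, ContinuousOn (f i k) Θ) (hh : ∀ i, ContinuousOn (h i) Θ)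
    (hfh : ∀ i, TendstoUniformlyOn (f i) (h i) atTop Θ)
    {x₀ : X} (hx₀ : x₀ ∈ Θ) (hident : ∀ x ∈ Θ, (∀ i, h i x = h i x₀) → x = x₀)
    {e : ι → ℕ → ℝ}
    (he : ∀ i, Tendsto (fun S : ℕ => (S : ℝ)⁻¹ * ∑ k ∈ Finset.range S, e i k) atTop (𝓝 0))
    (habs : ∀ i, ∃ c, Tendsto (fun S : ℕ => (S : ℝ)⁻¹ * ∑ k ∈ Finset.range S, |e i k|)
      atTop (𝓝 c))
    {x : ℕ → X} (hxΘ : ∀ S, x S ∈ Θ)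
    (hmin : ∀ S, ∑ i, ∑ k ∈ Finset.range S, (f i k x₀ + e i k - f i k (x S)) ^ 2 ≤
      ∑ i, ∑ k ∈ Finset.range S, e i k ^ 2) :
    Tendsto x atTop (𝓝 x₀) := by
  choose B hB using fun i =>
    hΘ.exists_bound_of_continuousOn (continuousOn_const (c := h i x₀) |>.sub (hh i))
  simp only [Pi.sub_apply, Real.norm_eq_abs] at hB
  choose u hu0 hu using fun i => (hfh i).exists_bound_tendsto_zero hΘ (hf i) (hh i)
  simp only [Real.norm_eq_abs] at hu
  have hG : ∀ i, Tendsto (fun S : ℕ =>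
      2 * ((S : ℝ)⁻¹ * ∑ k ∈ Finset.range S, 2 * u i k * (B i + |e i k|)) +
        2 * B i * |(S : ℝ)⁻¹ * ∑ k ∈ Finset.range S, e i k|) atTop (𝓝 0) := by
    intro i
    obtain ⟨c, hc⟩ := habs i
    have hBi : 0 ≤ B i := (abs_nonneg _).trans (hB i x₀ hx₀)
    have hBe : Tendsto (fun S : ℕ => (S : ℝ)⁻¹ * ∑ k ∈ Finset.range S, (B i + |e i k|)) atTop
        (𝓝 (B i + c)) := by
      simpa only [Finset.sum_add_distrib, mul_add] using
        (tendsto_const_nhds (x := B i)).cesaro.add hc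
    have hue := tendsto_cesaro_mul_of_tendsto_zero (w := fun k => 2 * u i k)
      (fun k => add_nonneg hBi (abs_nonneg (e i k))) (by simpa using (hu0 i).const_mul 2) hBe
    simpa only [mul_zero, add_zero, abs_zero] using
      (hue.const_mul 2).add ((he i).abs.const_mul (2 * B i))
  refine hΘ.tendsto_nhds_of_tendsto_comp (F := fun y => ∑ i, (h i x₀ - h i y) ^ 2)
    (continuousOn_finsetSum _ fun i _ => (continuousOn_const.sub (hh i)).pow 2)
    (fun y hy hy0 => hident y hy fun i => ?_) (.of_forall hxΘ) ?_
  · simp only [sub_self, zero_pow two_ne_zero, Finset.sum_const_zero] at hy0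
    have := (Finset.sum_eq_zero_iff_of_nonneg fun i _ => sq_nonneg (h i x₀ - h i y)).1 hy0 i
      (Finset.mem_univ i)
    exact (sub_eq_zero.1 (pow_eq_zero_iff two_ne_zero |>.1 this)).symm
  · simp only [sub_self, zero_pow two_ne_zero, Finset.sum_const_zero]
    refine tendsto_of_tendsto_of_tendsto_of_le_of_le' tendsto_const_nhds
      (by simpa using tendsto_finsetSum Finset.univ fun i _ => hG i)
      (.of_forall fun S => Finset.sum_nonneg fun i _ => sq_nonneg _)
      ((eventually_ne_atTop 0).mono fun S hS => sum_sq_le_of_leastSquares_le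
        (fun i => hB i _ (hxΘ S)) (fun i k => hu i k x₀ hx₀) (fun i k => hu i k _ (hxΘ S)) hS
        (hmin S))

theorem ae_tendsto_cesaro_of_iIndepFun {Ω ι : Type*} [MeasurableSpace Ω] {P : Measure Ω}
    {X : ι → Ω → ℝ} (hindep : iIndepFun X P) (hident : ∀ p q, IdentDistrib (X p) (X q) P P)
    (hint : ∀ p, Integrable (X p) P) {φ : ℕ → ι} (hφ : Function.Injective φ) :
    ∀ᵐ ω ∂P, Tendsto (fun S : ℕ => (S : ℝ)⁻¹ * ∑ k ∈ Finset.range S, X (φ k) ω) atTop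
      (𝓝 (∫ ω, X (φ 0) ω ∂P)) := by
  filter_upwards [strong_law_ae_real (fun k => X (φ k)) (hint _)
    (fun j k hjk => hindep.indepFun (hφ.ne hjk)) fun k => hident _ _] with ω hω
  simpa only [div_eq_inv_mul] using hω

theorem MeasureTheory.Integrable.of_integral_sq_ne_zero {Ω : Type*} [MeasurableSpace Ω]
    {P : Measure Ω} [IsFiniteMeasure P] {X : Ω → ℝ} (hX : AEStronglyMeasurable X P)
    (h : ∫ ω, X ω ^ 2 ∂P ≠ 0) : Integrable X P :=
  ((memLp_two_iff_integrable_sq hX).2 (Integrable.of_integral_ne_zero h)).integrable one_le_two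

theorem mapsTo_pow_mul_Icc {α b : ℝ} (hα₀ : 0 ≤ α) (hα₁ : α ≤ 1) (n : ℕ) :
    MapsTo (fun A => α ^ n * A) (Icc 0 b) (Icc 0 b) := fun _ hA =>
  ⟨mul_nonneg (pow_nonneg hα₀ n) hA.1,
    (mul_le_of_le_one_left hA.1 (pow_le_one₀ hα₀ hα₁)).trans hA.2⟩

theorem biosensor_array_ls_estimator_strongly_consistent_general
    {Amax : ℝ}
    {Astar : ℝ} (hAstar : Astar ∈ Icc (0:ℝ) Amax)
    {α : ℝ} (hα : α ∈ Ioc (0:ℝ) 1)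
    (g : ℝ → ℝ → ℝ) (ge : ℝ → ℝ)
    (hgc : ∀ t ≥ (0:ℝ), ContinuousOn (fun A => g A t) (Icc 0 Amax))
    (hgec : ContinuousOn ge (Icc 0 Amax)) (hgei : Set.InjOn ge (Icc 0 Amax))
    (hconv : TendstoUniformlyOn (fun (t : ℝ) (A : ℝ) => g A t) ge atTop (Icc 0 Amax))
    (tk : ℕ → ℝ) (htk0 : ∀ k, 0 ≤ tk k) (htk : Tendsto tk atTop atTop)
    {N : ℕ} (hN : 0 < N)
    {Ω : Type*} [MeasurableSpace Ω] {P : Measure Ω} [IsProbabilityMeasure P]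
    (noise : Fin N × ℕ → Ω → ℝ)
    (hnoisemeas : ∀ p, Measurable (noise p))
    (hindep : iIndepFun noise P)
    (hident : ∀ p q, IdentDistrib (noise p) (noise q) P P)
    {σ2 : ℝ} (hσ2 : 0 < σ2)
    (hmean : ∀ p, ∫ ω, noise p ω ∂P = 0)
    (hvar : ∀ p, ∫ ω, (noise p ω) ^ 2 ∂P = σ2)
    (m : Fin N → ℕ → Ω → ℝ)
    (hm : ∀ i k ω, m i k ω = g (α ^ (i : ℕ) * Astar) (tk k) + noise (i, k) ω)
    (Ahat : ℕ → Ω → ℝ)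
    (hAhatmem : ∀ S ω, Ahat S ω ∈ Icc (0:ℝ) Amax)
    (hAhatmin : ∀ (S : ℕ) ω, ∀ A₁ ∈ Icc (0:ℝ) Amax,
      (S : ℝ)⁻¹ * ∑ i, ∑ k ∈ Finset.Icc 1 S, (m i k ω - g (α ^ (i : ℕ) * Ahat S ω) (tk k)) ^ 2 ≤
      (S : ℝ)⁻¹ * ∑ i, ∑ k ∈ Finset.Icc 1 S, (m i k ω - g (α ^ (i : ℕ) * A₁) (tk k)) ^ 2) :
    ∀ᵐ ω ∂P, Tendsto (fun S => Ahat S ω) atTop (nhds Astar) := by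
  have hint : ∀ p, Integrable (noise p) P := fun p =>
    .of_integral_sq_ne_zero (hnoisemeas p).aestronglyMeasurable (hvar p ▸ hσ2.ne')
  have hshift : ∀ i : Fin N, Function.Injective fun k : ℕ => (i, k + 1) := fun i j k hjk => by
    simpa using hjk
  have hslln := ae_all_iff.2 fun i : Fin N =>
    (ae_tendsto_cesaro_of_iIndepFun hindep hident hint (hshift i)).and
      (ae_tendsto_cesaro_of_iIndepFun (hindep.comp (fun _ => abs) fun _ => measurable_abs)
        (fun p q => (hident p q).comp measurable_abs) (fun p => (hint p).abs) (hshift i))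
  filter_upwards [hslln] with ω hω
  have hmaps := mapsTo_pow_mul_Icc (b := Amax) hα.1.le hα.2
  refine tendsto_of_leastSquares_of_tendstoUniformlyOn isCompact_Icc
    (f := fun (i : Fin N) k A => g (α ^ (i : ℕ) * A) (tk (k + 1)))
    (h := fun (i : Fin N) A => ge (α ^ (i : ℕ) * A))
    (fun i k => (hgc _ (htk0 _)).comp (continuousOn_const.mul continuousOn_id) (hmaps i))
    (fun i => hgec.comp (continuousOn_const.mul continuousOn_id) (hmaps i))
    (fun i => ((hconv.comp _).mono (hmaps i)).comp_tendsto
      (htk.comp (tendsto_add_atTop_nat 1)))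
    hAstar (fun A hA hA' => hgei hA hAstar (by simpa using hA' ⟨0, hN⟩))
    (fun i => hmean _ ▸ (hω i).1) (fun i => ⟨_, (hω i).2⟩) (hAhatmem · ω) fun S => ?_
  have hmin := hAhatmin S ω Astar hAstar
  simp only [Finset.sum_Icc_one_eq_sum_range, hm, add_sub_cancel_left] at hmin
  rcases Nat.eq_zero_or_pos S with rfl | hS
  · simp
  · exact le_of_mul_le_mul_left hmin (by positivity)

/-- Strong consistency of the least squares concentration estimator for a biosensor array
(first claim of Theorem 4.4): with observations `m_i^k = g(α^{i−1} A*, t^k) + n_i^k`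
(biosensor `i : Fin N` representing the `(i+1)`-st sensor, so its outer-compartment
concentration is `α^i A*`), i.i.d. mean-zero noise of finite variance `σ² > 0`,
`g(·, t) → g_e` uniformly with `g_e` continuous and injective on `Θ = [0, A_max]`, and
sampling times `t^k → ∞`, any sequence of measurable least squares estimators `Â₁(S)`
converges to the true inlet concentration `A*` almost surely as `S → ∞`. -/
theorem biosensor_array_ls_estimator_strongly_consistent
    {Amax : ℝ} (hAmax : 0 < Amax)
    {Astar : ℝ} (hAstar : Astar ∈ Icc (0:ℝ) Amax)
    {α : ℝ} (hα : α ∈ Ioc (0:ℝ) 1)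
    (g : ℝ → ℝ → ℝ) (ge : ℝ → ℝ)
    (hgc : ∀ t ≥ (0:ℝ), ContinuousOn (fun A => g A t) (Icc 0 Amax))
    (hgec : ContinuousOn ge (Icc 0 Amax)) (hgei : Set.InjOn ge (Icc 0 Amax))
    (hconv : TendstoUniformlyOn (fun (t : ℝ) (A : ℝ) => g A t) ge atTop (Icc 0 Amax))
    (tk : ℕ → ℝ) (htk0 : ∀ k, 0 ≤ tk k) (htk : Tendsto tk atTop atTop)
    {N : ℕ} (hN : 0 < N)
    {Ω : Type*} [MeasurableSpace Ω] {P : Measure Ω} [IsProbabilityMeasure P]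
    (noise : Fin N × ℕ → Ω → ℝ)
    (hnoisemeas : ∀ p, Measurable (noise p))
    (hindep : iIndepFun noise P)
    (hident : ∀ p q, IdentDistrib (noise p) (noise q) P P)
    {σ2 : ℝ} (hσ2 : 0 < σ2)
    (hmean : ∀ p, ∫ ω, noise p ω ∂P = 0)
    (hvar : ∀ p, ∫ ω, (noise p ω) ^ 2 ∂P = σ2)
    (m : Fin N → ℕ → Ω → ℝ)
    (hm : ∀ i k ω, m i k ω = g (α ^ (i : ℕ) * Astar) (tk k) + noise (i, k) ω)
    (Ahat : ℕ → Ω → ℝ)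
    (hAhatmeas : ∀ S, Measurable (Ahat S))
    (hAhatmem : ∀ S ω, Ahat S ω ∈ Icc (0:ℝ) Amax)
    (hAhatmin : ∀ (S : ℕ) ω, ∀ A₁ ∈ Icc (0:ℝ) Amax,
      (S : ℝ)⁻¹ * ∑ i, ∑ k ∈ Finset.Icc 1 S, (m i k ω - g (α ^ (i : ℕ) * Ahat S ω) (tk k)) ^ 2 ≤
      (S : ℝ)⁻¹ * ∑ i, ∑ k ∈ Finset.Icc 1 S, (m i k ω - g (α ^ (i : ℕ) * A₁) (tk k)) ^ 2) :
    ∀ᵐ ω ∂P, Tendsto (fun S => Ahat S ω) atTop (nhds Astar) :=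
  biosensor_array_ls_estimator_strongly_consistent_general hAstar hα g ge hgc hgec hgei hconv tk
    htk0 htk hN noise hnoisemeas hindep hident hσ2 hmean hvar m hm Ahat hAhatmem hAhatmin
end
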